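/- arXiv:1606.02563 — 2 statements merged into one kernel-verified Lean document; each statement's English description precedes it below -/
import Mathlib

section
/- Let n ≥ 2 and let u be a C² function on an open set G ⊆ ℝⁿ \ {0} with nonvanishing gradient satisfying div(|∇u|^{n-2}∇u) = 0. Then v(x) = u(x/|x|²) satisfies div(|∇v|^{n-2}∇v) = 0 on the reflected domain G* = { x : x/|x|² ∈ G } (at points where ∇v ≠ 0). -/
open Real
open scoped RealInnerProductSpace

/-- The `p`-Laplacian `div(|∇f|^(p-2) ∇f)` of `f`, computed classically as the trace of the
derivative of the vector field `y ↦ ‖∇f(y)‖^(p-2) • ∇f(y)`. -/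
noncomputable def pLaplacian {n : ℕ} (p : ℝ) (f : EuclideanSpace ℝ (Fin n) → ℝ)
    (x : EuclideanSpace ℝ (Fin n)) : ℝ :=
  LinearMap.trace ℝ (EuclideanSpace ℝ (Fin n))
    ((fderiv ℝ (fun y => ‖gradient f y‖ ^ (p - 2) • gradient f y) x).toLinearMap)

/-!
The inversion `ι x = x / ‖x‖²` is conformal: `Dι(x) = ‖x‖⁻² R_x`, where `R_x` is the reflection
in the hyperplane `x^⊥`. Hence `∇(u ∘ ι)(x) = ‖x‖⁻² R_x ∇u(ι x)`, and the flux
`|∇u|^(p-2) ∇u` of `u ∘ ι` at `x` is `‖x‖^(2(1-p)) R_x` applied to the flux of `u` at `ι x`.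
Differentiating such a transformed field by the product rule gives, in dimension `n`,

  `Δ_p (u ∘ ι)(x) = ‖x‖^(-2p) (Δ_p u(ι x) + 2 (p - n) ⟪x, |∇u|^(p-2) ∇u (ι x)⟫)`,

and the error term vanishes exactly for the conformal exponent `p = n`.
-/

open EuclideanGeometry Submodule

section InversionCalculus

variable {E : Type*} [NormedAddCommGroup E] [InnerProductSpace ℝ E]

theorem reflection_orthogonalComplement_singleton_apply (z w : E) :
    (ℝ ∙ z)ᗮ.reflection w = w - (2 * ⟪z, w⟫ / ‖z‖ ^ 2) • z := by
  rw [reflection_orthogonal_apply, reflection_singleton_apply]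
  simp only [RCLike.ofReal_real_eq_id, id]
  module

theorem inner_reflection_left (K : Submodule ℝ E) [K.HasOrthogonalProjection] (a b : E) :
    ⟪K.reflection a, b⟫ = ⟪a, K.reflection b⟫ := by
  conv_lhs => rw [← reflection_reflection K b]
  exact K.reflection.inner_map_map a (K.reflection b)

theorem inversion_zero_one_apply (x : E) : inversion (0 : E) 1 x = (‖x‖ ^ 2)⁻¹ • x := by
  simp [inversion, one_div, inv_pow]

theorem hasFDerivAt_inversion_zero_one {x : E} (hx : x ≠ 0) :
    HasFDerivAt (inversion (0 : E) 1) ((‖x‖ ^ 2)⁻¹ • ((ℝ ∙ x)ᗮ.reflection : E →L[ℝ] E)) x := by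
  simpa [one_div, inv_pow] using hasFDerivAt_inversion (R := 1) hx

theorem fderiv_comp_inversion_apply_self {F : Type*} [NormedAddCommGroup F] [NormedSpace ℝ F]
    {A : E → F} {x : E} (hx : x ≠ 0) (hA : DifferentiableAt ℝ A (inversion 0 1 x)) :
    fderiv ℝ (A ∘ inversion 0 1) x x = -(‖x‖ ^ 2)⁻¹ • fderiv ℝ A (inversion 0 1 x) x := by
  rw [(hA.hasFDerivAt.comp x (hasFDerivAt_inversion_zero_one hx)).fderiv]
  simp [reflection_orthogonalComplement_singleton_eq_neg]

theorem hasFDerivAt_norm_sq_rpow {x : E} (hx : x ≠ 0) (s : ℝ) :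
    HasFDerivAt (fun z : E => (‖z‖ ^ 2) ^ s) ((2 * s * (‖x‖ ^ 2) ^ (s - 1)) • innerSL ℝ x) x := by
  have h := (hasStrictFDerivAt_norm_sq x).hasFDerivAt.rpow_const (p := s) (Or.inl (by positivity))
  convert h using 1
  ext w
  simp only [smul_apply, innerSL_apply_apply, smul_eq_mul, two_nsmul, add_apply]
  ring

noncomputable def divergence (V : E → E) (x : E) : ℝ :=
  LinearMap.trace ℝ E (fderiv ℝ V x).toLinearMap

theorem divergence_sub {V W : E → E} {x : E} (hV : DifferentiableAt ℝ V x)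
    (hW : DifferentiableAt ℝ W x) :
    divergence (fun z => V z - W z) x = divergence V x - divergence W x := by
  simp only [divergence, fderiv_fun_sub hV hW, ContinuousLinearMap.toLinearMap_sub, map_sub]

variable [FiniteDimensional ℝ E]

noncomputable def pFlux (p : ℝ) (f : E → ℝ) (y : E) : E :=
  ‖gradient f y‖ ^ (p - 2) • gradient f y

theorem divergence_smul {φ : E → ℝ} {V : E → E} {x : E} (hφ : DifferentiableAt ℝ φ x)
    (hV : DifferentiableAt ℝ V x) :
    divergence (fun z => φ z • V z) x = fderiv ℝ φ x (V x) + φ x * divergence V x := by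
  simp only [divergence, fderiv_fun_smul hφ hV, ContinuousLinearMap.toLinearMap_add,
    ContinuousLinearMap.toLinearMap_smul, map_add, map_smul, smul_eq_mul]
  rw [ContinuousLinearMap.coe_smulRight, LinearMap.trace_smulRight, ContinuousLinearMap.coe_coe,
    add_comm]

theorem divergence_smul_id {φ : E → ℝ} {x : E} (hφ : DifferentiableAt ℝ φ x) :
    divergence (fun z => φ z • z) x = fderiv ℝ φ x x + φ x * Module.finrank ℝ E := by
  have h : divergence (fun z => φ z • z) x = fderiv ℝ φ x x + φ x * divergence id x :=
    divergence_smul hφ differentiableAt_id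
  rw [h, divergence, fderiv_id, ContinuousLinearMap.coe_id, LinearMap.trace_id]

theorem trace_comp_reflection_orthogonalComplement_singleton (T : E →L[ℝ] E) (z : E) :
    LinearMap.trace ℝ E (T ∘L ((ℝ ∙ z)ᗮ.reflection : E →L[ℝ] E)).toLinearMap
      = LinearMap.trace ℝ E T.toLinearMap - 2 * ⟪z, T z⟫ / ‖z‖ ^ 2 := by
  have h : (T ∘L ((ℝ ∙ z)ᗮ.reflection : E →L[ℝ] E)).toLinearMap
      = T.toLinearMap - ((2 / ‖z‖ ^ 2) • (innerₛₗ ℝ z)).smulRight (T z) := by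
    ext w
    change T ((ℝ ∙ z)ᗮ.reflection w) = T w - ((2 / ‖z‖ ^ 2) * ⟪z, w⟫) • T z
    rw [reflection_orthogonalComplement_singleton_apply, map_sub, map_smul, mul_comm_div, mul_div_assoc]
  rw [h, map_sub, LinearMap.trace_smulRight, LinearMap.smul_apply, innerₛₗ_apply_apply,
    smul_eq_mul, mul_comm_div, mul_div_assoc]

theorem divergence_comp_inversion {A : E → E} {x : E} (hx : x ≠ 0)
    (hA : DifferentiableAt ℝ A (inversion 0 1 x)) :
    divergence (A ∘ inversion 0 1) x = (‖x‖ ^ 2)⁻¹ *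
      (divergence A (inversion 0 1 x) - 2 * ⟪x, fderiv ℝ A (inversion 0 1 x) x⟫ / ‖x‖ ^ 2) := by
  rw [divergence, (hA.hasFDerivAt.comp x (hasFDerivAt_inversion_zero_one hx)).fderiv,
    ContinuousLinearMap.comp_smul, ContinuousLinearMap.toLinearMap_smul, map_smul,
    trace_comp_reflection_orthogonalComplement_singleton, smul_eq_mul, divergence]

theorem divergence_rpow_smul_reflection_comp_inversion (p : ℝ) {A : E → E} {x : E} (hx : x ≠ 0)
    (hA : DifferentiableAt ℝ A (inversion 0 1 x)) :
    divergence (fun z => (‖z‖ ^ 2) ^ (1 - p) • (ℝ ∙ z)ᗮ.reflection (A (inversion 0 1 z))) x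
      = (‖x‖ ^ 2) ^ (-p) * (divergence A (inversion 0 1 x)
          + 2 * (p - Module.finrank ℝ E) * ⟪x, A (inversion 0 1 x)⟫) := by
  set B := A ∘ inversion 0 1
  have hN : 0 < ‖x‖ ^ 2 := by positivity
  have hB : DifferentiableAt ℝ B x :=
    hA.comp x (hasFDerivAt_inversion_zero_one hx).differentiableAt
  have hexpand : (fun z => (‖z‖ ^ 2) ^ (1 - p) • (ℝ ∙ z)ᗮ.reflection (A (inversion 0 1 z)))
      =ᶠ[nhds x] fun z => (‖z‖ ^ 2) ^ (1 - p) • B z - (2 * ⟪z, B z⟫ * (‖z‖ ^ 2) ^ (-p)) • z := by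
    filter_upwards [eventually_ne_nhds hx] with z hz
    have hz2 : 0 < ‖z‖ ^ 2 := by positivity
    rw [reflection_orthogonalComplement_singleton_apply, smul_sub, smul_smul]
    congr 2
    rw [show 1 - p = -p + 1 by ring, rpow_add_one hz2.ne']
    field_simp
    rfl
  have hf := hasFDerivAt_norm_sq_rpow hx (1 - p)
  have hh : HasFDerivAt (fun z => 2 * ⟪z, B z⟫ * (‖z‖ ^ 2) ^ (-p)) _ x :=
    (((hasFDerivAt_id x).inner ℝ hB.hasFDerivAt).const_mul 2).mul (hasFDerivAt_norm_sq_rpow hx (-p))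
  have hfB : DifferentiableAt ℝ (fun z => (‖z‖ ^ 2) ^ (1 - p) • B z) x :=
    hf.differentiableAt.smul hB
  have hhz : DifferentiableAt ℝ (fun z => (2 * ⟪z, B z⟫ * (‖z‖ ^ 2) ^ (-p)) • z) x :=
    hh.differentiableAt.smul differentiableAt_id
  rw [divergence, hexpand.fderiv_eq, ← divergence, divergence_sub hfB hhz,
    divergence_smul hf.differentiableAt hB, divergence_smul_id hh.differentiableAt, hf.fderiv,
    hh.fderiv, divergence_comp_inversion hx hA]
  simp only [smul_apply, innerSL_apply_apply, smul_eq_mul, add_apply, fderivInnerCLM_apply,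
    ContinuousLinearMap.comp_apply, ContinuousLinearMap.prod_apply, id,
    ContinuousLinearMap.coe_id', fderiv_comp_inversion_apply_self hx hA, B, Function.comp,
    real_inner_self_eq_norm_sq, real_inner_smul_right]
  rw [show 1 - p = -p + 1 by ring, rpow_add_one hN.ne', show -p + 1 - 1 = -p by ring,
    rpow_sub_one hN.ne']
  field_simp
  ring

theorem hasGradientAt_comp_inversion {u : E → ℝ} {x : E} (hx : x ≠ 0)
    (hu : DifferentiableAt ℝ u (inversion 0 1 x)) :
    HasGradientAt (u ∘ inversion 0 1)
      ((‖x‖ ^ 2)⁻¹ • (ℝ ∙ x)ᗮ.reflection (gradient u (inversion 0 1 x))) x := by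
  rw [hasGradientAt_iff_hasFDerivAt]
  refine (hu.hasFDerivAt.comp x (hasFDerivAt_inversion_zero_one hx)).congr_fderiv ?_
  ext w
  simp only [InnerProductSpace.toDual_apply_apply, inner_reflection_left,
    ContinuousLinearMap.comp_apply, smul_apply, map_smul, smul_eq_mul, inner_gradient_left]
  rfl

theorem pFlux_comp_inversion (p : ℝ) {u : E → ℝ} {x : E} (hx : x ≠ 0)
    (hu : DifferentiableAt ℝ u (inversion 0 1 x)) :
    pFlux p (u ∘ inversion 0 1) x
      = (‖x‖ ^ 2) ^ (1 - p) • (ℝ ∙ x)ᗮ.reflection (pFlux p u (inversion 0 1 x)) := by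
  have hN : 0 < ‖x‖ ^ 2 := by positivity
  rw [pFlux, pFlux, (hasGradientAt_comp_inversion hx hu).gradient, norm_smul,
    LinearIsometryEquiv.norm_map, norm_inv, norm_pow, norm_norm,
    mul_rpow (inv_nonneg.2 hN.le) (norm_nonneg _), map_smul, smul_smul, smul_smul, inv_rpow hN.le,
    ← rpow_neg hN.le, mul_assoc, mul_comm _ (‖x‖ ^ 2)⁻¹, ← mul_assoc, ← div_eq_mul_inv,
    ← rpow_sub_one hN.ne']
  ring_nf

theorem divergence_pFlux_comp_inversion (p : ℝ) {u : E → ℝ} {x : E} (hx : x ≠ 0)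
    (hu : ∀ᶠ y in nhds (inversion 0 1 x), DifferentiableAt ℝ u y)
    (hA : DifferentiableAt ℝ (pFlux p u) (inversion 0 1 x)) :
    divergence (pFlux p (u ∘ inversion 0 1)) x
      = (‖x‖ ^ 2) ^ (-p) * (divergence (pFlux p u) (inversion 0 1 x)
          + 2 * (p - Module.finrank ℝ E) * ⟪x, pFlux p u (inversion 0 1 x)⟫) := by
  have hnear : ∀ᶠ y in nhds x, y ≠ 0 ∧ DifferentiableAt ℝ u (inversion 0 1 y) :=
    (eventually_ne_nhds hx).and
      ((hasFDerivAt_inversion_zero_one hx).continuousAt.tendsto.eventually hu)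
  have hflux : pFlux p (u ∘ inversion 0 1) =ᶠ[nhds x]
      fun y => (‖y‖ ^ 2) ^ (1 - p) • (ℝ ∙ y)ᗮ.reflection (pFlux p u (inversion 0 1 y)) := by
    filter_upwards [hnear] with y ⟨hy, huy⟩
    exact pFlux_comp_inversion p hy huy
  rw [divergence, hflux.fderiv_eq, ← divergence,
    divergence_rpow_smul_reflection_comp_inversion p hx hA]

theorem differentiableAt_pFlux {u : E → ℝ} {y : E} (hu : ContDiffAt ℝ 2 u y)
    (hy : gradient u y ≠ 0) (p : ℝ) : DifferentiableAt ℝ (pFlux p u) y := by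
  have hgrad : DifferentiableAt ℝ (gradient u) y :=
    ((InnerProductSpace.toDual ℝ E).symm.contDiff.contDiffAt.comp y
      (hu.fderiv_right (m := 1) (by norm_num))).differentiableAt one_ne_zero
  exact ((hgrad.norm ℝ hy).rpow_const (p := p - 2) (Or.inl (norm_ne_zero_iff.2 hy))).smul hgrad

end InversionCalculus

theorem pLaplacian_eq_divergence_pFlux {n : ℕ} (p : ℝ) (f : EuclideanSpace ℝ (Fin n) → ℝ)
    (x : EuclideanSpace ℝ (Fin n)) : pLaplacian p f x = divergence (pFlux p f) x :=
  rfl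

theorem stmt_6_general (n : ℕ) (G : Set (EuclideanSpace ℝ (Fin n)))
    (hG : IsOpen G)
    (u : EuclideanSpace ℝ (Fin n) → ℝ)
    (hu : ContDiffOn ℝ 2 u G)
    (hug : ∀ x ∈ G, gradient u x ≠ 0)
    (huh : ∀ x ∈ G, pLaplacian (n : ℝ) u x = 0)
    (v : EuclideanSpace ℝ (Fin n) → ℝ)
    (hv : v = fun y => u ((‖y‖ ^ 2)⁻¹ • y))
    (x : EuclideanSpace ℝ (Fin n)) (hx : x ≠ 0) (hxG : (‖x‖ ^ 2)⁻¹ • x ∈ G) :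
    pLaplacian (n : ℝ) v x = 0 := by
  simp only [← inversion_zero_one_apply] at hv hxG
  obtain rfl : v = u ∘ inversion 0 1 := hv
  have hu_near : ∀ᶠ y in nhds (inversion 0 1 x), DifferentiableAt ℝ u y :=
    Filter.eventually_of_mem (hG.mem_nhds hxG) fun y hy =>
      (hu.contDiffAt (hG.mem_nhds hy)).differentiableAt two_ne_zero
  have hA := differentiableAt_pFlux (hu.contDiffAt (hG.mem_nhds hxG)) (hug _ hxG) n
  rw [pLaplacian_eq_divergence_pFlux, divergence_pFlux_comp_inversion n hx hu_near hA,
    ← pLaplacian_eq_divergence_pFlux, huh _ hxG, finrank_euclideanSpace_fin, sub_self]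
  ring

theorem stmt_6 (n : ℕ) (hn : 2 ≤ n) (G : Set (EuclideanSpace ℝ (Fin n)))
    (hG : IsOpen G) (hG0 : (0 : EuclideanSpace ℝ (Fin n)) ∉ G)
    (u : EuclideanSpace ℝ (Fin n) → ℝ)
    (hu : ContDiffOn ℝ 2 u G)
    (hug : ∀ x ∈ G, gradient u x ≠ 0)
    (huh : ∀ x ∈ G, pLaplacian (n : ℝ) u x = 0)
    (v : EuclideanSpace ℝ (Fin n) → ℝ)
    (hv : v = fun y => u ((‖y‖ ^ 2)⁻¹ • y))
    (x : EuclideanSpace ℝ (Fin n)) (hx : x ≠ 0) (hxG : (‖x‖ ^ 2)⁻¹ • x ∈ G)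
    (hgv : gradient v x ≠ 0) :
    pLaplacian (n : ℝ) v x = 0 :=
  stmt_6_general n G hG u hu hug huh v hv x hx hxG
end

section
/- Let n ≥ 2, 1 < p < ∞. If α ∈ ℝ and the function v(x) = |x|^α x₁ satisfies div(|∇v|^{p-2}∇v) = 0 at every point of ℝⁿ \ {0} where ∇v ≠ 0, then α + n + (p-2)(2α+3) = 0 and (α+2)[α(α+n) + (p-2)(α²+α-1)] = 0, or α = 0. -/
open Real
open scoped RealInnerProductSpace

/-!
Away from the origin, `v y = ‖y‖ ^ α * ⟪e, y⟫` has gradient `(α ⟪e, y⟫ ‖y‖ ^ (α - 2)) • y + ‖y‖ ^ α • e`,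
of squared norm `‖y‖ ^ (2α - 2) Q` with `Q = α (α + 2) ⟪e, y⟫ ^ 2 + ‖y‖ ^ 2`. Hence the flux
`‖∇v‖ ^ (p - 2) • ∇v` is again of the form `a y • y + b y • e`, with `a` and `b` products of powers
of `⟪e, y⟫`, `‖y‖` and `Q`, and its divergence `n a + Da(x) x + Db(x) e` is a positive multiple of
`⟪e, x⟫ (α (α + 2) K ⟪e, x⟫ ^ 2 + α L ‖x‖ ^ 2)`, where `L` and `K` are the two polynomials of the
conclusion. At `x = e₁ + t e₂` we have `⟪e₁, x⟫ = 1` and `‖x‖ ^ 2 = 1 + t ^ 2`, so `t = 1, 2` give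
`α L = 0` and `α (α + 2) K = 0`.
-/

theorem trace_fderiv_smul_self_add_smul {𝕜 E : Type*} [NontriviallyNormedField 𝕜]
    [NormedAddCommGroup E] [NormedSpace 𝕜 E] [FiniteDimensional 𝕜 E] {a b : E → 𝕜}
    {a' b' : E →L[𝕜] 𝕜} {x : E} (ha : HasFDerivAt a a' x) (hb : HasFDerivAt b b' x) (e : E) :
    LinearMap.trace 𝕜 E (fderiv 𝕜 (fun y => a y • y + b y • e) x).toLinearMap
      = Module.finrank 𝕜 E * a x + a' x + b' e := by
  have hF : HasFDerivAt (fun y => a y • y + b y • e) _ x :=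
    (ha.smul (hasFDerivAt_id x)).add (hb.smul_const e)
  simp [hF.fderiv, add_assoc, mul_comm]

section InnerProductSpace

variable {E : Type*} [NormedAddCommGroup E] [InnerProductSpace ℝ E]

theorem hasFDerivAt_norm_rpow_of_ne_zero {x : E} (hx : x ≠ 0) (r : ℝ) :
    HasFDerivAt (fun y : E => ‖y‖ ^ r) ((r * ‖x‖ ^ (r - 2)) • innerSL ℝ x) x := by
  convert! ((hasStrictFDerivAt_norm_sq x).rpow_const (p := r / 2) (by simp [hx])).hasFDerivAt
    using 0
  simp_rw [← Real.rpow_natCast_mul (norm_nonneg _), ← Nat.cast_smul_eq_nsmul ℝ, smul_smul]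
  ring_nf

theorem hasGradientAt_norm_rpow_mul_inner [CompleteSpace E] (α : ℝ) (e : E) {x : E}
    (hx : x ≠ 0) :
    HasGradientAt (fun y => ‖y‖ ^ α * ⟪e, y⟫)
      ((α * ⟪e, x⟫ * ‖x‖ ^ (α - 2)) • x + ‖x‖ ^ α • e) x := by
  rw [hasGradientAt_iff_hasFDerivAt]
  refine ((hasFDerivAt_norm_rpow_of_ne_zero hx α).mul (innerSL ℝ e).hasFDerivAt).congr_fderiv ?_
  ext h
  simp only [add_apply, smul_apply, coe_innerSL_apply,
    InnerProductSpace.toDual_apply_apply, inner_add_left, inner_smul_left, smul_eq_mul,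
    conj_trivial]
  ring

theorem norm_sq_smul_add_norm_rpow_smul {e : E} (he : ‖e‖ = 1) (α : ℝ) {y : E} (hy : y ≠ 0) :
    ‖(α * ⟪e, y⟫ * ‖y‖ ^ (α - 2)) • y + ‖y‖ ^ α • e‖ ^ 2
      = ‖y‖ ^ (2 * α - 2) * (α * (α + 2) * ⟪e, y⟫ ^ 2 + ‖y‖ ^ 2) := by
  have hy' : 0 < ‖y‖ := norm_pos_iff.mpr hy
  have h1 : ‖y‖ ^ α = ‖y‖ ^ (α - 2) * ‖y‖ ^ 2 := by
    rw [← rpow_natCast, ← rpow_add hy']; norm_num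
  have h2 : ‖y‖ ^ (2 * α - 2) = (‖y‖ ^ (α - 2)) ^ 2 * ‖y‖ ^ 2 := by
    rw [← rpow_natCast, ← rpow_natCast, ← rpow_mul hy'.le, ← rpow_add hy']; norm_num; ring_nf
  rw [norm_add_sq_real, norm_smul, norm_smul, inner_smul_left, inner_smul_right, he,
    real_inner_comm, h1, h2]
  simp only [Real.norm_eq_abs, mul_pow, sq_abs, conj_trivial]
  ring

theorem mul_inner_sq_add_norm_sq_nonneg {e : E} (he : ‖e‖ = 1) {κ : ℝ} (hκ : -1 ≤ κ) (y : E) :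
    0 ≤ κ * ⟪e, y⟫ ^ 2 + ‖y‖ ^ 2 := by
  have h : ⟪e, y⟫ ^ 2 ≤ ‖y‖ ^ 2 := by
    simpa [he] using sq_le_sq' (neg_le_of_abs_le (abs_real_inner_le_norm e y))
      (le_of_abs_le (abs_real_inner_le_norm e y))
  nlinarith [sq_nonneg ⟪e, y⟫]

theorem norm_rpow_smul_smul_add_norm_rpow_smul {e : E} (he : ‖e‖ = 1) (α q : ℝ) {y : E}
    (hy : y ≠ 0) :
    ‖(α * ⟪e, y⟫ * ‖y‖ ^ (α - 2)) • y + ‖y‖ ^ α • e‖ ^ q •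
        ((α * ⟪e, y⟫ * ‖y‖ ^ (α - 2)) • y + ‖y‖ ^ α • e)
      = (α * ⟪e, y⟫ * ‖y‖ ^ ((α - 1) * q + α - 2)
          * (α * (α + 2) * ⟪e, y⟫ ^ 2 + ‖y‖ ^ 2) ^ (q / 2)) • y
        + (‖y‖ ^ ((α - 1) * q + α) * (α * (α + 2) * ⟪e, y⟫ ^ 2 + ‖y‖ ^ 2) ^ (q / 2)) • e := by
  have hy' : 0 < ‖y‖ := norm_pos_iff.mpr hy
  have hQ := mul_inner_sq_add_norm_sq_nonneg he (κ := α * (α + 2)) (by nlinarith [sq_nonneg (α + 1)]) y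
  have hnorm : ‖(α * ⟪e, y⟫ * ‖y‖ ^ (α - 2)) • y + ‖y‖ ^ α • e‖ ^ q
      = ‖y‖ ^ ((α - 1) * q) * (α * (α + 2) * ⟪e, y⟫ ^ 2 + ‖y‖ ^ 2) ^ (q / 2) := by
    calc _ = (‖(α * ⟪e, y⟫ * ‖y‖ ^ (α - 2)) • y + ‖y‖ ^ α • e‖ ^ 2) ^ (q / 2) := by
          rw [← rpow_natCast, ← rpow_mul (norm_nonneg _)]; ring_nf
      _ = _ := by
          rw [norm_sq_smul_add_norm_rpow_smul he α hy, mul_rpow (rpow_nonneg hy'.le _) hQ,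
            ← rpow_mul hy'.le]
          ring_nf
  have h1 : ‖y‖ ^ ((α - 1) * q + α - 2) = ‖y‖ ^ ((α - 1) * q) * ‖y‖ ^ (α - 2) := by
    rw [← rpow_add hy']; ring_nf
  rw [hnorm, smul_add, smul_smul, smul_smul, h1, rpow_add hy']
  congr 2 <;> ring

theorem trace_fderiv_inner_mul_norm_rpow_smul_add [FiniteDimensional ℝ E] {e : E}
    (he : ‖e‖ = 1) (β κ m δ : ℝ) {x : E} (hx : x ≠ 0) (hQ : κ * ⟪e, x⟫ ^ 2 + ‖x‖ ^ 2 ≠ 0) :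
    LinearMap.trace ℝ E (fderiv ℝ (fun y =>
        (β * ⟪e, y⟫ * ‖y‖ ^ (m - 2) * (κ * ⟪e, y⟫ ^ 2 + ‖y‖ ^ 2) ^ δ) • y
          + (‖y‖ ^ m * (κ * ⟪e, y⟫ ^ 2 + ‖y‖ ^ 2) ^ δ) • e) x).toLinearMap
      = ⟪e, x⟫ * ‖x‖ ^ (m - 2) * (κ * ⟪e, x⟫ ^ 2 + ‖x‖ ^ 2) ^ (δ - 1)
        * ((β * (Module.finrank ℝ E + m - 1 + 2 * δ) + m) * (κ * ⟪e, x⟫ ^ 2 + ‖x‖ ^ 2)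
          + 2 * δ * (κ + 1) * ‖x‖ ^ 2) := by
  have hx' : 0 < ‖x‖ := norm_pos_iff.mpr hx
  have hinner : HasFDerivAt (fun y => ⟪e, y⟫) (innerSL ℝ e) x := (innerSL ℝ e).hasFDerivAt
  have hQδ : HasFDerivAt (fun y => (κ * ⟪e, y⟫ ^ 2 + ‖y‖ ^ 2) ^ δ) _ x :=
    (((hinner.pow 2).const_mul κ).add (hasStrictFDerivAt_norm_sq x).hasFDerivAt).rpow_const
      (Or.inl hQ)
  have ha : HasFDerivAt (fun y => β * ⟪e, y⟫ * ‖y‖ ^ (m - 2) * (κ * ⟪e, y⟫ ^ 2 + ‖y‖ ^ 2) ^ δ)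
      _ x :=
    ((hinner.const_mul β).mul (hasFDerivAt_norm_rpow_of_ne_zero hx (m - 2))).mul hQδ
  have hb : HasFDerivAt (fun y => ‖y‖ ^ m * (κ * ⟪e, y⟫ ^ 2 + ‖y‖ ^ 2) ^ δ) _ x :=
    (hasFDerivAt_norm_rpow_of_ne_zero hx m).mul hQδ
  rw [trace_fderiv_smul_self_add_smul ha hb]
  simp only [Pi.mul_apply, Pi.add_apply, Nat.add_one_sub_one, pow_one, nsmul_eq_mul,
    Nat.cast_ofNat, smul_add, add_apply, smul_apply, coe_innerSL_apply, smul_eq_mul,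
    real_inner_self_eq_norm_sq, he, real_inner_comm e x]
  have hm : ‖x‖ ^ m = ‖x‖ ^ (m - 2) * ‖x‖ ^ 2 := by
    rw [← rpow_natCast, ← rpow_add hx']; norm_num
  have hm' : ‖x‖ ^ (m - 2) = ‖x‖ ^ (m - 2 - 2) * ‖x‖ ^ 2 := by
    rw [← rpow_natCast, ← rpow_add hx']; norm_num
  have hδ : (κ * ⟪e, x⟫ ^ 2 + ‖x‖ ^ 2) ^ δ
      = (κ * ⟪e, x⟫ ^ 2 + ‖x‖ ^ 2) ^ (δ - 1) * (κ * ⟪e, x⟫ ^ 2 + ‖x‖ ^ 2) := by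
    rw [← rpow_add_one hQ]; norm_num
  rw [hm, hδ, hm']
  ring

theorem gradient_norm_rpow_mul_inner_ne_zero [CompleteSpace E] {e : E} (he : ‖e‖ = 1) (α : ℝ)
    {x : E} (hx : x ≠ 0) (hQ : 0 < α * (α + 2) * ⟪e, x⟫ ^ 2 + ‖x‖ ^ 2) :
    gradient (fun y => ‖y‖ ^ α * ⟪e, y⟫) x ≠ 0 := by
  have hpos : 0 < ‖x‖ ^ (2 * α - 2) * (α * (α + 2) * ⟪e, x⟫ ^ 2 + ‖x‖ ^ 2) :=
    mul_pos (rpow_pos_of_pos (norm_pos_iff.mpr hx) _) hQ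
  rw [← norm_sq_smul_add_norm_rpow_smul he α hx] at hpos
  rw [(hasGradientAt_norm_rpow_mul_inner α e hx).gradient, ← norm_ne_zero_iff]
  exact fun h0 => by simp [h0] at hpos

end InnerProductSpace

theorem pLaplacian_norm_rpow_mul_inner {n : ℕ} {e : EuclideanSpace ℝ (Fin n)} (he : ‖e‖ = 1)
    (p α : ℝ) {x : EuclideanSpace ℝ (Fin n)} (hx : x ≠ 0)
    (hQ : α * (α + 2) * ⟪e, x⟫ ^ 2 + ‖x‖ ^ 2 ≠ 0) :
    pLaplacian p (fun y => ‖y‖ ^ α * ⟪e, y⟫) x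
      = ⟪e, x⟫ * ‖x‖ ^ ((α - 1) * (p - 2) + α - 2)
          * (α * (α + 2) * ⟪e, x⟫ ^ 2 + ‖x‖ ^ 2) ^ ((p - 2) / 2 - 1)
          * (α * (α + 2) * (α * (α + n) + (p - 2) * (α ^ 2 + α - 1)) * ⟪e, x⟫ ^ 2
            + α * (α + n + (p - 2) * (2 * α + 3)) * ‖x‖ ^ 2) := by
  have hfield : (fun y => ‖gradient (fun y => ‖y‖ ^ α * ⟪e, y⟫) y‖ ^ (p - 2)
        • gradient (fun y => ‖y‖ ^ α * ⟪e, y⟫) y)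
      =ᶠ[nhds x] fun y =>
        (α * ⟪e, y⟫ * ‖y‖ ^ ((α - 1) * (p - 2) + α - 2)
          * (α * (α + 2) * ⟪e, y⟫ ^ 2 + ‖y‖ ^ 2) ^ ((p - 2) / 2)) • y
        + (‖y‖ ^ ((α - 1) * (p - 2) + α)
          * (α * (α + 2) * ⟪e, y⟫ ^ 2 + ‖y‖ ^ 2) ^ ((p - 2) / 2)) • e := by
    filter_upwards [eventually_ne_nhds hx] with y hy
    rw [(hasGradientAt_norm_rpow_mul_inner α e hy).gradient,
      norm_rpow_smul_smul_add_norm_rpow_smul he α (p - 2) hy]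
  rw [pLaplacian, hfield.fderiv_eq, trace_fderiv_inner_mul_norm_rpow_smul_add he _ _ _ _ hx hQ,
    finrank_euclideanSpace_fin]
  ring

theorem coeff_combination_eq_zero_of_pLaplacian_eq_zero {n : ℕ} {i j : Fin n} (hij : i ≠ j)
    (p α : ℝ) {t : ℝ} (ht : t ≠ 0)
    (h : ∀ x : EuclideanSpace ℝ (Fin n), x ≠ 0 → gradient (fun y => ‖y‖ ^ α * y i) x ≠ 0 →
      pLaplacian p (fun y => ‖y‖ ^ α * y i) x = 0) :
    α * (α + 2) * (α * (α + n) + (p - 2) * (α ^ 2 + α - 1))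
      + α * (α + n + (p - 2) * (2 * α + 3)) * (1 + t ^ 2) = 0 := by
  set e := EuclideanSpace.single i (1 : ℝ)
  set x := e + EuclideanSpace.single j t
  have he : ‖e‖ = 1 := by simp [e]
  have hc : ⟪e, x⟫ = 1 := by simp [e, x, EuclideanSpace.inner_single_left, hij]
  have hs : ‖x‖ ^ 2 = 1 + t ^ 2 := by
    simp [e, x, norm_add_sq_real, EuclideanSpace.inner_single_left, hij]
  have hx : x ≠ 0 := by rintro h0; simp [h0] at hc
  have hQ : 0 < α * (α + 2) * ⟪e, x⟫ ^ 2 + ‖x‖ ^ 2 := by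
    rw [hc, hs]; nlinarith [sq_nonneg (α + 1), pow_pos (abs_pos.mpr ht) 2, sq_abs t]
  have hv : (fun y : EuclideanSpace ℝ (Fin n) => ‖y‖ ^ α * y i) = fun y => ‖y‖ ^ α * ⟪e, y⟫ := by
    simp [e, EuclideanSpace.inner_single_left]
  rw [hv] at h
  have h0 := h x hx (gradient_norm_rpow_mul_inner_ne_zero he α hx hQ)
  have hpos : 0 < ⟪e, x⟫ * ‖x‖ ^ ((α - 1) * (p - 2) + α - 2)
      * (α * (α + 2) * ⟪e, x⟫ ^ 2 + ‖x‖ ^ 2) ^ ((p - 2) / 2 - 1) :=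
    mul_pos (mul_pos (hc ▸ one_pos) (rpow_pos_of_pos (norm_pos_iff.mpr hx) _))
      (rpow_pos_of_pos hQ _)
  rw [pLaplacian_norm_rpow_mul_inner he p α hx hQ.ne', mul_eq_zero] at h0
  have hbracket := h0.resolve_left hpos.ne'
  rw [hc, hs] at hbracket
  linear_combination hbracket

theorem stmt_11 (n : ℕ) (hn : 2 ≤ n) (p : ℝ) (α : ℝ)
    (v : EuclideanSpace ℝ (Fin n) → ℝ)
    (hv : v = fun y => ‖y‖ ^ α * y ⟨0, by omega⟩)
    (h : ∀ x : EuclideanSpace ℝ (Fin n), x ≠ 0 → gradient v x ≠ 0 → pLaplacian p v x = 0) :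
    (α + n + (p - 2) * (2 * α + 3) = 0 ∧
      (α + 2) * (α * (α + n) + (p - 2) * (α ^ 2 + α - 1)) = 0) ∨ α = 0 := by
  rcases eq_or_ne α 0 with hα | hα
  · exact Or.inr hα
  subst hv
  have hline := fun (t : ℝ) (ht : t ≠ 0) => coeff_combination_eq_zero_of_pLaplacian_eq_zero
    (i := ⟨0, by omega⟩) (j := ⟨1, by omega⟩) (by simp) p α ht h
  have h1 := hline 1 one_ne_zero
  have h2 := hline 2 two_ne_zero
  refine Or.inl ⟨?_, ?_⟩
  · have hL : α * (α + n + (p - 2) * (2 * α + 3)) = 0 := by linear_combination (h2 - h1) / 3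
    exact (mul_eq_zero.mp hL).resolve_left hα
  · have hK : α * ((α + 2) * (α * (α + n) + (p - 2) * (α ^ 2 + α - 1))) = 0 := by
      linear_combination (5 * h1 - 2 * h2) / 3
    exact (mul_eq_zero.mp hK).resolve_left hα
end
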